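/- Downward Löwenheim–Skolem for QLET_F: if S is a signature of cardinality λ and Γ is a set of S-sentences that has a model, then Γ has a model whose domain has cardinality at most λ. -/

import Mathlib

set_option autoImplicit true
set_option relaxedAutoImplicit true

namespace QLETF

/-- Formulas of a first-order language with a classicality operator `cl` (∘),
a non-classicality operator `ncl` (•), identity `eq`, over a type `K` of
individual constants.  Terms are `ℕ ⊕ K`: `Sum.inl n` is the variable `vₙ`,
`Sum.inr c` is the constant `c`.  Predicate letters are indexed by `ℕ`. -/
inductive Fm (K : Type) : Type where
  | pred : ℕ → List (ℕ ⊕ K) → Fm K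
  | eq   : (ℕ ⊕ K) → (ℕ ⊕ K) → Fm K
  | neg  : Fm K → Fm K
  | conj : Fm K → Fm K → Fm K
  | disj : Fm K → Fm K → Fm K
  | cl   : Fm K → Fm K
  | ncl  : Fm K → Fm K
  | all  : ℕ → Fm K → Fm K
  | ex   : ℕ → Fm K → Fm K

variable {K K' : Type}

/-- Substitution on terms: replace the variable `x` by the term `t`. -/
def substT (x : ℕ) (t : ℕ ⊕ K) : (ℕ ⊕ K) → (ℕ ⊕ K)
  | .inl y => if y = x then t else .inl y
  | .inr c => .inr c

/-- `subst x t A` replaces every free occurrence of the variable `x` in `A` by `t`. -/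
def subst (x : ℕ) (t : ℕ ⊕ K) : Fm K → Fm K
  | .pred n ts => .pred n (ts.map (substT x t))
  | .eq a b    => .eq (substT x t a) (substT x t b)
  | .neg A     => .neg (subst x t A)
  | .conj A B  => .conj (subst x t A) (subst x t B)
  | .disj A B  => .disj (subst x t A) (subst x t B)
  | .cl A      => .cl (subst x t A)
  | .ncl A     => .ncl (subst x t A)
  | .all y A   => if y = x then .all y A else .all y (subst x t A)
  | .ex y A    => if y = x then .ex y A else .ex y (subst x t A)

/-- The set of free variables of a formula. -/
def fv : Fm K → Set ℕ
  | .pred _ ts => {y | Sum.inl y ∈ ts}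
  | .eq a b    => {y | a = Sum.inl y ∨ b = Sum.inl y}
  | .neg A     => fv A
  | .conj A B  => fv A ∪ fv B
  | .disj A B  => fv A ∪ fv B
  | .cl A      => fv A
  | .ncl A     => fv A
  | .all y A   => fv A \ {y}
  | .ex y A    => fv A \ {y}

/-- The set of all (free or bound) variables occurring in a formula. -/
def vars : Fm K → Set ℕ
  | .pred _ ts => {y | Sum.inl y ∈ ts}
  | .eq a b    => {y | a = Sum.inl y ∨ b = Sum.inl y}
  | .neg A     => vars A
  | .conj A B  => vars A ∪ vars B
  | .disj A B  => vars A ∪ vars B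
  | .cl A      => vars A
  | .ncl A     => vars A
  | .all y A   => insert y (vars A)
  | .ex y A    => insert y (vars A)

/-- The constant `c` occurs in the formula. -/
def cOcc (c : K) : Fm K → Prop
  | .pred _ ts => Sum.inr c ∈ ts
  | .eq a b    => a = Sum.inr c ∨ b = Sum.inr c
  | .neg A     => cOcc c A
  | .conj A B  => cOcc c A ∨ cOcc c B
  | .disj A B  => cOcc c A ∨ cOcc c B
  | .cl A      => cOcc c A
  | .ncl A     => cOcc c A
  | .all _ A   => cOcc c A
  | .ex _ A    => cOcc c A

/-- A sentence is a formula with no free variables. -/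
def Closed (A : Fm K) : Prop := fv A = ∅

/-- The formula contains no occurrence of the operators ∘ and •. -/
def clFree : Fm K → Prop
  | .pred _ _ => True
  | .eq _ _   => True
  | .neg A    => clFree A
  | .conj A B => clFree A ∧ clFree B
  | .disj A B => clFree A ∧ clFree B
  | .cl _     => False
  | .ncl _    => False
  | .all _ A  => clFree A
  | .ex _ A   => clFree A

/-- Alphabetic variance: the least equivalence relation, compatible with the
connectives, that allows renaming a bound variable to a fresh one. -/
inductive Alpha : Fm K → Fm K → Prop
  | refl (A : Fm K) : Alpha A A
  | symm : Alpha A B → Alpha B A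
  | trans : Alpha A B → Alpha B C → Alpha A C
  | negC : Alpha A B → Alpha (.neg A) (.neg B)
  | conjC : Alpha A A' → Alpha B B' → Alpha (.conj A B) (.conj A' B')
  | disjC : Alpha A A' → Alpha B B' → Alpha (.disj A B) (.disj A' B')
  | clC : Alpha A B → Alpha (.cl A) (.cl B)
  | nclC : Alpha A B → Alpha (.ncl A) (.ncl B)
  | allC : Alpha A B → Alpha (.all x A) (.all x B)
  | exC : Alpha A B → Alpha (.ex x A) (.ex x B)
  | allR (x y : ℕ) (A : Fm K) : y ∉ vars A →
      Alpha (.all x A) (.all y (subst x (Sum.inl y) A))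
  | exR (x y : ℕ) (A : Fm K) : y ∉ vars A →
      Alpha (.ex x A) (.ex y (subst x (Sum.inl y) A))

/-- The natural deduction system QLET_F (sequent-style: `Deriv Γ A` means that
`A` is derivable from the set of hypotheses `Γ`). -/
inductive Deriv : Set (Fm K) → Fm K → Prop
  | hyp : A ∈ Γ → Deriv Γ A
  | andI : Deriv Γ A → Deriv Γ B → Deriv Γ (.conj A B)
  | andE1 : Deriv Γ (.conj A B) → Deriv Γ A
  | andE2 : Deriv Γ (.conj A B) → Deriv Γ B
  | orI1 : Deriv Γ A → Deriv Γ (.disj A B)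
  | orI2 : Deriv Γ B → Deriv Γ (.disj A B)
  | orE : Deriv Γ (.disj A B) → Deriv (insert A Γ) C → Deriv (insert B Γ) C → Deriv Γ C
  | negAndI1 : Deriv Γ (.neg A) → Deriv Γ (.neg (.conj A B))
  | negAndI2 : Deriv Γ (.neg B) → Deriv Γ (.neg (.conj A B))
  | negAndE : Deriv Γ (.neg (.conj A B)) → Deriv (insert (.neg A) Γ) C →
      Deriv (insert (.neg B) Γ) C → Deriv Γ C
  | negOrI : Deriv Γ (.neg A) → Deriv Γ (.neg B) → Deriv Γ (.neg (.disj A B))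
  | negOrE1 : Deriv Γ (.neg (.disj A B)) → Deriv Γ (.neg A)
  | negOrE2 : Deriv Γ (.neg (.disj A B)) → Deriv Γ (.neg B)
  | dnI : Deriv Γ A → Deriv Γ (.neg (.neg A))
  | dnE : Deriv Γ (.neg (.neg A)) → Deriv Γ A
  | expO : Deriv Γ (.cl A) → Deriv Γ A → Deriv Γ (.neg A) → Deriv Γ B
  | pemO : Deriv Γ (.cl A) → Deriv Γ (.disj A (.neg A))
  | consR : Deriv Γ (.cl A) → Deriv Γ (.ncl A) → Deriv Γ B
  | compR : Deriv Γ (.disj (.cl A) (.ncl A))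
  | allI : Deriv Γ (.disj B (subst x (Sum.inr c) A)) → ¬ cOcc c A → ¬ cOcc c B →
      (∀ G ∈ Γ, ¬ cOcc c G) → Deriv Γ (.disj B (.all x A))
  | allE : Deriv Γ (.all x A) → Deriv Γ (subst x (Sum.inr c) A)
  | exI : Deriv Γ (subst x (Sum.inr c) A) → Deriv Γ (.ex x A)
  | exE : Deriv Γ (.ex x A) → Deriv (insert (subst x (Sum.inr c) A) Γ) C →
      ¬ cOcc c A → ¬ cOcc c C → (∀ G ∈ Γ, ¬ cOcc c G) → Deriv Γ C
  | negAllI : Deriv Γ (.neg (subst x (Sum.inr c) A)) → Deriv Γ (.neg (.all x A))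
  | negAllE : Deriv Γ (.neg (.all x A)) → Deriv (insert (.neg (subst x (Sum.inr c) A)) Γ) C →
      ¬ cOcc c A → ¬ cOcc c C → (∀ G ∈ Γ, ¬ cOcc c G) → Deriv Γ C
  | negExI : Deriv Γ (.neg (subst x (Sum.inr c) A)) → ¬ cOcc c A →
      (∀ G ∈ Γ, ¬ cOcc c G) → Deriv Γ (.neg (.ex x A))
  | negExE : Deriv Γ (.neg (.ex x A)) → Deriv Γ (.neg (subst x (Sum.inr c) A))
  | eqI : Deriv Γ (.eq (Sum.inr c) (Sum.inr c))
  | eqE : Deriv Γ (.eq (Sum.inr c₁) (Sum.inr c₂)) → Deriv Γ (subst x (Sum.inr c₁) A) →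
      Deriv Γ (subst x (Sum.inr c₂) A)
  | av : Deriv Γ A → Alpha A A' → Deriv Γ A'

/-- An S-structure: each constant denotes an element of the domain `D`, each
predicate letter gets an extension `Pplus` and an anti-extension `Pminus`;
the extension of identity is fixed as the diagonal, its anti-extension
`eqMinus` is arbitrary. -/
structure Struc (C D : Type) where
  cI : C → D
  Pplus : ℕ → List D → Prop
  Pminus : ℕ → List D → Prop
  eqMinus : D → D → Prop

variable {C D : Type}

/-- Denotation of a constant of the diagram language (`C ⊕ D`): a diagram
constant `ā` (for `a : D`) denotes `a` itself. -/
def den (S : Struc C D) : C ⊕ D → D := Sum.elim S.cI id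

/-- Clauses (1)-(7) and (10)-(13) of the valuation definition: the clauses
for atomic and negated atomic sentences, ∧, ∨, De Morgan negations,
double negation, and the substitutional quantifier clauses. -/
structure ValCore (S : Struc C D) (v : Fm (C ⊕ D) → Bool) : Prop where
  atom : ∀ (n : ℕ) (cs : List (C ⊕ D)),
    v (.pred n (cs.map Sum.inr)) = true ↔ S.Pplus n (cs.map (den S))
  natom : ∀ (n : ℕ) (cs : List (C ⊕ D)),
    v (.neg (.pred n (cs.map Sum.inr))) = true ↔ S.Pminus n (cs.map (den S))
  eqP : ∀ a b : C ⊕ D, v (.eq (Sum.inr a) (Sum.inr b)) = true ↔ den S a = den S b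
  eqN : ∀ a b : C ⊕ D, v (.neg (.eq (Sum.inr a) (Sum.inr b))) = true ↔
    S.eqMinus (den S a) (den S b)
  andC : ∀ A B, Closed A → Closed B →
    (v (.conj A B) = true ↔ v A = true ∧ v B = true)
  orC : ∀ A B, Closed A → Closed B →
    (v (.disj A B) = true ↔ v A = true ∨ v B = true)
  nandC : ∀ A B, Closed A → Closed B →
    (v (.neg (.conj A B)) = true ↔ v (.neg A) = true ∨ v (.neg B) = true)
  norC : ∀ A B, Closed A → Closed B →
    (v (.neg (.disj A B)) = true ↔ v (.neg A) = true ∧ v (.neg B) = true)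
  dnC : ∀ A, Closed A → v (.neg (.neg A)) = v A
  allC : ∀ (x : ℕ) (A : Fm (C ⊕ D)), fv A ⊆ {x} →
    (v (.all x A) = true ↔ ∀ d : D, v (subst x (Sum.inr (Sum.inr d)) A) = true)
  exC : ∀ (x : ℕ) (A : Fm (C ⊕ D)), fv A ⊆ {x} →
    (v (.ex x A) = true ↔ ∃ d : D, v (subst x (Sum.inr (Sum.inr d)) A) = true)
  nallC : ∀ (x : ℕ) (A : Fm (C ⊕ D)), fv A ⊆ {x} →
    (v (.neg (.all x A)) = true ↔ ∃ d : D, v (.neg (subst x (Sum.inr (Sum.inr d)) A)) = true)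
  nexC : ∀ (x : ℕ) (A : Fm (C ⊕ D)), fv A ⊆ {x} →
    (v (.neg (.ex x A)) = true ↔ ∀ d : D, v (.neg (subst x (Sum.inr (Sum.inr d)) A)) = true)

/-- An 𝔄-valuation for QLET_F: the determined clauses together with clauses
(8), (9), (14) (alphabetic variants) and (15). -/
structure IsVal (S : Struc C D) (v : Fm (C ⊕ D) → Bool) extends ValCore S v : Prop where
  clC : ∀ A, Closed A → v (.cl A) = true → (v A = true ↔ v (.neg A) = false)
  compC : ∀ A, Closed A → (v (.cl A) = true ↔ v (.ncl A) = false)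
  avC : ∀ A A', Closed A → Alpha A A' → v A = v A'
  substC : ∀ (x : ℕ) (A : Fm (C ⊕ D)), fv A ⊆ {x} → ∀ c₁ c₂ : C ⊕ D,
    den S c₁ = den S c₂ →
    v (subst x (Sum.inr c₁) A) = v (subst x (Sum.inr c₂) A) →
    (v (.neg (subst x (Sum.inr c₁) A)) = v (.neg (subst x (Sum.inr c₂) A)) ∧
     v (.cl (subst x (Sum.inr c₁) A)) = v (.cl (subst x (Sum.inr c₂) A)) ∧
     v (.ncl (subst x (Sum.inr c₁) A)) = v (.ncl (subst x (Sum.inr c₂) A)))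

/-- Map a formula along a renaming of its constants (used to embed the base
language into the diagram language). -/
def Fm.map (f : K → K') : Fm K → Fm K'
  | .pred n ts => .pred n (ts.map (Sum.map id f))
  | .eq a b    => .eq (Sum.map id f a) (Sum.map id f b)
  | .neg A     => .neg (Fm.map f A)
  | .conj A B  => .conj (Fm.map f A) (Fm.map f B)
  | .disj A B  => .disj (Fm.map f A) (Fm.map f B)
  | .cl A      => .cl (Fm.map f A)
  | .ncl A     => .ncl (Fm.map f A)
  | .all y A   => .all y (Fm.map f A)
  | .ex y A    => .ex y (Fm.map f A)

/-- A sentence of the base language holds in the interpretation ⟨S, v⟩. -/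
def Sat (S : Struc C D) (v : Fm (C ⊕ D) → Bool) (A : Fm C) : Prop :=
  v (A.map Sum.inl) = true

/-- Semantic consequence: every interpretation making all of Γ hold makes A hold. -/
def SemCons (Γ : Set (Fm C)) (A : Fm C) : Prop :=
  ∀ (D : Type) (S : Struc C D) (v : Fm (C ⊕ D) → Bool), Nonempty D → IsVal S v →
    (∀ B ∈ Γ, Sat S v B) → Sat S v A

/-- Γ has a model. -/
def HasModel (Γ : Set (Fm C)) : Prop :=
  ∃ (D : Type) (S : Struc C D) (v : Fm (C ⊕ D) → Bool),
    Nonempty D ∧ IsVal S v ∧ ∀ B ∈ Γ, Sat S v B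

/-- Henkin set: Δ proves an existential iff it proves some instance, and a
universal iff it proves every instance. -/
def Henkin (Δ : Set (Fm K)) : Prop :=
  ∀ (x : ℕ) (B : Fm K),
    (Deriv Δ (.ex x B) ↔ ∃ c : K, Deriv Δ (subst x (Sum.inr c) B)) ∧
    (Deriv Δ (.all x B) ↔ ∀ c : K, Deriv Δ (subst x (Sum.inr c) B))

/-- Regular set: non-trivial, deductively closed, and disjunctive. -/
def Regular (Δ : Set (Fm K)) : Prop :=
  (∃ A, ¬ Deriv Δ A) ∧ (∀ A, Deriv Δ A → A ∈ Δ) ∧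
  (∀ A B, Deriv Δ (.disj A B) → Deriv Δ A ∨ Deriv Δ B)

end QLETF

/-!
Skolem hull. Starting from the denotations of the constants, close the domain of a model under
chosen witnesses: for every formula with one free variable over the current set and each truth
value, add an element whose instance takes that value, if there is one. After `ω` rounds the set
has at most `#C` elements, since over a set of size `κ ≥ ℵ₀` there are at most `κ` formulas.
Restricting structure and valuation to the hull gives a model of the same sentences: the clauses
without quantifiers transfer along the embedding of formulas, the quantifier clauses by the
witness closure (Tarski–Vaught).
-/

namespace QLETF

variable {K K' K'' : Type}

section Cardinality

open scoped Cardinal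

/-- Prefix-free serialisation: Polish notation, atoms recording their arity. -/
def Fm.encode : Fm K → List (ℕ ⊕ (ℕ ⊕ K))
  | .pred n ts => .inl 0 :: .inl n :: .inl ts.length :: ts.map .inr
  | .eq a b => [.inl 1, .inr a, .inr b]
  | .neg A => .inl 2 :: A.encode
  | .conj A B => .inl 3 :: (A.encode ++ B.encode)
  | .disj A B => .inl 4 :: (A.encode ++ B.encode)
  | .cl A => .inl 5 :: A.encode
  | .ncl A => .inl 6 :: A.encode
  | .all x A => .inl 7 :: .inl x :: A.encode
  | .ex x A => .inl 8 :: .inl x :: A.encode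

theorem Fm.encode_append_inj {A B : Fm K} {l l' : List (ℕ ⊕ (ℕ ⊕ K))}
    (h : A.encode ++ l = B.encode ++ l') : A = B ∧ l = l' := by
  induction A generalizing B l l' with
  | pred n ts =>
    cases B <;> simp [encode] at h
    obtain ⟨rfl, hlen, h⟩ := h
    obtain ⟨hts, rfl⟩ := List.append_inj h (by simpa using hlen)
    exact ⟨by rw [List.map_injective_iff.mpr Sum.inr_injective hts], rfl⟩
  | eq a b => cases B <;> simp_all [encode]
  | neg A ih | cl A ih | ncl A ih =>
    cases B <;> simp [encode] at h
    obtain ⟨rfl, rfl⟩ := ih h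
    exact ⟨rfl, rfl⟩
  | conj A₁ A₂ ih₁ ih₂ | disj A₁ A₂ ih₁ ih₂ =>
    cases B <;> simp [encode] at h
    obtain ⟨rfl, h₂⟩ := ih₁ h
    obtain ⟨rfl, rfl⟩ := ih₂ h₂
    exact ⟨rfl, rfl⟩
  | all x A ih | ex x A ih =>
    cases B <;> simp [encode] at h
    obtain ⟨rfl, h⟩ := h
    obtain ⟨rfl, rfl⟩ := ih h
    exact ⟨rfl, rfl⟩

theorem Fm.encode_injective : Function.Injective (Fm.encode (K := K)) := fun A B h =>
  (encode_append_inj (l := []) (l' := []) (by simpa using h)).1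

theorem mk_fm_le {κ : Cardinal} (hκ : ℵ₀ ≤ κ) (hK : #K ≤ κ) : #(Fm K) ≤ κ := by
  have hℕ : #ℕ ≤ κ := Cardinal.mk_le_aleph0.trans hκ
  calc #(Fm K) ≤ #(List (ℕ ⊕ (ℕ ⊕ K))) :=
        Cardinal.mk_le_of_injective Fm.encode_injective
    _ ≤ max ℵ₀ #(ℕ ⊕ (ℕ ⊕ K)) := Cardinal.mk_list_le_max _
    _ ≤ κ := by
        refine max_le hκ ?_
        simp only [Cardinal.mk_sum, Cardinal.lift_id]
        exact Cardinal.add_le_of_le hκ hℕ (Cardinal.add_le_of_le hκ hℕ hK)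

end Cardinality

section Map

theorem Fm.fv_map (f : K → K') (A : Fm K) : fv (A.map f) = fv A := by
  induction A with
  | pred n ts => ext y; simp [Fm.map, fv]
  | eq a b => ext y; cases a <;> cases b <;> simp [Fm.map, fv]
  | _ => simp_all [Fm.map, fv]

theorem Fm.vars_map (f : K → K') (A : Fm K) : vars (A.map f) = vars A := by
  induction A with
  | pred n ts => ext y; simp [Fm.map, vars]
  | eq a b => ext y; cases a <;> cases b <;> simp [Fm.map, vars]
  | _ => simp_all [Fm.map, vars]

theorem Fm.closed_map_iff (f : K → K') (A : Fm K) : Closed (A.map f) ↔ Closed A := by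
  rw [Closed, Closed, fv_map]

theorem Fm.map_subst (f : K → K') (x : ℕ) (t : ℕ ⊕ K) (A : Fm K) :
    (subst x t A).map f = subst x (Sum.map id f t) (A.map f) := by
  have hT : ∀ a, Sum.map id f (substT x t a) = substT x (Sum.map id f t) (Sum.map id f a) := by
    rintro (y | c)
    · by_cases y = x <;> simp [substT, *]
    · rfl
  induction A with
  | pred n ts => simp [Fm.map, subst, hT]
  | eq a b => simp [Fm.map, subst, hT]
  | all y A ih | ex y A ih => simp only [subst]; split_ifs <;> simp [Fm.map, subst, *]
  | _ => simp_all [Fm.map, subst]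

theorem Fm.map_map (f : K → K') (g : K' → K'') (A : Fm K) :
    (A.map f).map g = A.map (g ∘ f) := by
  induction A with
  | pred n ts => simp [Fm.map]
  | eq a b => simp [Fm.map, Sum.map_map]
  | _ => simp_all [Fm.map]

theorem Alpha.map (f : K → K') {A B : Fm K} (h : Alpha A B) : Alpha (A.map f) (B.map f) := by
  induction h with
  | refl A => exact .refl _
  | symm _ ih => exact .symm ih
  | trans _ _ ih₁ ih₂ => exact .trans ih₁ ih₂
  | negC _ ih => exact .negC ih
  | conjC _ _ ih₁ ih₂ => exact .conjC ih₁ ih₂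
  | disjC _ _ ih₁ ih₂ => exact .disjC ih₁ ih₂
  | clC _ ih => exact .clC ih
  | nclC _ ih => exact .nclC ih
  | allC _ ih => exact .allC ih
  | exC _ ih => exact .exC ih
  | allR x y A hy =>
    simpa [Fm.map, Fm.map_subst] using Alpha.allR x y (A.map f) (by rwa [Fm.vars_map])
  | exR x y A hy =>
    simpa [Fm.map, Fm.map_subst] using Alpha.exR x y (A.map f) (by rwa [Fm.vars_map])

end Map

section Restriction

variable {C D : Type} (S : Struc C D) (v : Fm (C ⊕ D) → Bool) (s : Set D)

def Fm.embed : Fm (C ⊕ s) → Fm (C ⊕ D) := Fm.map (Sum.map id Subtype.val)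

def Struc.restrict (hs : Set.range S.cI ⊆ s) : Struc C s where
  cI c := ⟨S.cI c, hs ⟨c, rfl⟩⟩
  Pplus n l := S.Pplus n (l.map Subtype.val)
  Pminus n l := S.Pminus n (l.map Subtype.val)
  eqMinus a b := S.eqMinus a b

/-- The Tarski–Vaught condition, for the four quantifier clauses at once: a negated instance
is the instance of the negated formula, and both truth values must be witnessed because a
valuation need not be compositional for negation. -/
def IsWitnessClosed : Prop :=
  ∀ (x : ℕ) (A : Fm (C ⊕ s)) (b : Bool),
    (∃ d : D, v (subst x (.inr (.inr d)) (Fm.embed s A)) = b) →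
      ∃ d : s, v (subst x (.inr (.inr d.val)) (Fm.embed s A)) = b

variable {S v s}

theorem den_restrict (hs : Set.range S.cI ⊆ s) (c : C ⊕ s) :
    (den (S.restrict s hs) c).val = den S (Sum.map id Subtype.val c) := by
  rcases c with c | d <;> rfl

theorem map_den_restrict (hs : Set.range S.cI ⊆ s) (cs : List (C ⊕ s)) :
    (cs.map (den (S.restrict s hs))).map Subtype.val =
      (cs.map (Sum.map id Subtype.val)).map (den S) := by
  simp only [List.map_map]
  exact List.map_congr_left fun c _ => den_restrict hs c

theorem Fm.embed_subst (x : ℕ) (c : C ⊕ s) (A : Fm (C ⊕ s)) :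
    Fm.embed s (subst x (.inr c) A) = subst x (.inr (Sum.map id Subtype.val c)) (Fm.embed s A) :=
  Fm.map_subst _ _ _ _

theorem Fm.embed_neg (A : Fm (C ⊕ s)) : Fm.embed s (.neg A) = .neg (Fm.embed s A) := rfl

theorem Fm.embed_cl (A : Fm (C ⊕ s)) : Fm.embed s (.cl A) = .cl (Fm.embed s A) := rfl

theorem Fm.embed_ncl (A : Fm (C ⊕ s)) : Fm.embed s (.ncl A) = .ncl (Fm.embed s A) := rfl

theorem Fm.embed_eq_inr (a b : C ⊕ s) :
    Fm.embed s (.eq (.inr a) (.inr b)) =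
      .eq (.inr (Sum.map id Subtype.val a)) (.inr (Sum.map id Subtype.val b)) := rfl

theorem Fm.embed_pred_inr (n : ℕ) (cs : List (C ⊕ s)) :
    Fm.embed s (.pred n (cs.map .inr)) = .pred n ((cs.map (Sum.map id Subtype.val)).map .inr) := by
  simp only [embed, Fm.map, List.map_map]
  rfl

theorem IsWitnessClosed.forall_iff (hw : IsWitnessClosed v s) (x : ℕ) (A : Fm (C ⊕ s))
    (b : Bool) : (∀ d : D, v (subst x (.inr (.inr d)) (Fm.embed s A)) = b) ↔
      ∀ d : s, v (subst x (.inr (.inr d.val)) (Fm.embed s A)) = b := by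
  refine ⟨fun h d => h d, fun h d => ?_⟩
  by_contra hne
  obtain ⟨d', hd'⟩ := hw x A (!b) ⟨d, Bool.eq_not_iff.2 hne⟩
  simp [h d'] at hd'

theorem IsWitnessClosed.exists_iff (hw : IsWitnessClosed v s) (x : ℕ) (A : Fm (C ⊕ s))
    (b : Bool) : (∃ d : D, v (subst x (.inr (.inr d)) (Fm.embed s A)) = b) ↔
      ∃ d : s, v (subst x (.inr (.inr d.val)) (Fm.embed s A)) = b :=
  ⟨hw x A b, fun ⟨d, hd⟩ => ⟨d, hd⟩⟩

theorem isVal_restrict (hv : IsVal S v) (hs : Set.range S.cI ⊆ s) (hw : IsWitnessClosed v s) :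
    IsVal (S.restrict s hs) (v ∘ Fm.embed s) := by
  have hcl {A : Fm (C ⊕ s)} (hA : Closed A) : Closed (Fm.embed s A) :=
    (Fm.closed_map_iff _ _).2 hA
  have hfv {x : ℕ} {A : Fm (C ⊕ s)} (hA : fv A ⊆ {x}) : fv (Fm.embed s A) ⊆ {x} := by
    rwa [Fm.embed, Fm.fv_map]
  refine
    { atom := fun n cs => ?_, natom := fun n cs => ?_, eqP := fun a b => ?_, eqN := fun a b => ?_,
      andC := fun A B hA hB => hv.andC _ _ (hcl hA) (hcl hB),
      orC := fun A B hA hB => hv.orC _ _ (hcl hA) (hcl hB),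
      nandC := fun A B hA hB => hv.nandC _ _ (hcl hA) (hcl hB),
      norC := fun A B hA hB => hv.norC _ _ (hcl hA) (hcl hB),
      dnC := fun A hA => hv.dnC _ (hcl hA),
      allC := fun x A hA => ?_, exC := fun x A hA => ?_,
      nallC := fun x A hA => ?_, nexC := fun x A hA => ?_,
      clC := fun A hA => hv.clC _ (hcl hA),
      compC := fun A hA => hv.compC _ (hcl hA),
      avC := fun A A' hA h => hv.avC _ _ (hcl hA) (h.map _),
      substC := fun x A hA c₁ c₂ hc h => ?_ }
  · rw [Function.comp_apply, Fm.embed_pred_inr, hv.atom]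
    exact iff_of_eq (congrArg _ (map_den_restrict hs cs).symm)
  · rw [Function.comp_apply, Fm.embed_neg, Fm.embed_pred_inr, hv.natom]
    exact iff_of_eq (congrArg _ (map_den_restrict hs cs).symm)
  · rw [Function.comp_apply, Fm.embed_eq_inr, hv.eqP, ← den_restrict hs, ← den_restrict hs,
      Subtype.val_inj]
  · rw [Function.comp_apply, Fm.embed_neg, Fm.embed_eq_inr, hv.eqN, ← den_restrict hs,
      ← den_restrict hs]
    rfl
  · simp only [Function.comp_apply, Fm.embed_subst]
    exact (hv.allC x _ (hfv hA)).trans (hw.forall_iff x A true)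
  · simp only [Function.comp_apply, Fm.embed_subst]
    exact (hv.exC x _ (hfv hA)).trans (hw.exists_iff x A true)
  · simp only [Function.comp_apply, Fm.embed_neg, Fm.embed_subst]
    exact (hv.nallC x _ (hfv hA)).trans (hw.exists_iff x (.neg A) true)
  · simp only [Function.comp_apply, Fm.embed_neg, Fm.embed_subst]
    exact (hv.nexC x _ (hfv hA)).trans (hw.forall_iff x (.neg A) true)
  · simp only [Function.comp_apply, Fm.embed_neg, Fm.embed_cl, Fm.embed_ncl, Fm.embed_subst]
      at h ⊢
    exact hv.substC x _ (hfv hA) _ _ (by rw [← den_restrict hs, ← den_restrict hs, hc]) h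

theorem sat_restrict (hs : Set.range S.cI ⊆ s) {B : Fm C} :
    Sat (S.restrict s hs) (v ∘ Fm.embed s) B ↔ Sat S v B := by
  rw [Sat, Sat, Function.comp_apply, Fm.embed, Fm.map_map]
  rfl

end Restriction

section DirectedUnion

open Filter

variable {C D : Type} {t : ℕ → Set D}

theorem Fm.embed_map_inclusion {s s' : Set D} (h : s ⊆ s') (A : Fm (C ⊕ s)) :
    Fm.embed s' (A.map (Sum.map id (Set.inclusion h))) = Fm.embed s A := by
  rw [Fm.embed, Fm.embed, Fm.map_map, Sum.map_comp_map]
  rfl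

theorem eventually_mem_range_sumMap_inclusion (ht : Monotone t) (c : C ⊕ ↥(⋃ n, t n)) :
    ∀ᶠ n in atTop, c ∈ Set.range (Sum.map id (Set.inclusion (Set.subset_iUnion t n))) := by
  rcases c with c | ⟨d, hd⟩
  · exact Eventually.of_forall fun _ => ⟨.inl c, rfl⟩
  · obtain ⟨m, hm⟩ := Set.mem_iUnion.1 hd
    filter_upwards [eventually_ge_atTop m] with n hn
    exact ⟨.inr ⟨d, ht hn hm⟩, rfl⟩

theorem Fm.eventually_mem_range_map_inclusion (ht : Monotone t) (A : Fm (C ⊕ ↥(⋃ n, t n))) :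
    ∀ᶠ n in atTop,
      A ∈ Set.range (Fm.map (Sum.map id (Set.inclusion (Set.subset_iUnion t n)))) := by
  have hterm (a : ℕ ⊕ (C ⊕ ↥(⋃ n, t n))) : ∀ᶠ n in atTop,
      a ∈ Set.range (Sum.map id (Sum.map id (Set.inclusion (Set.subset_iUnion t n)))) := by
    rcases a with y | c
    · exact Eventually.of_forall fun _ => ⟨.inl y, rfl⟩
    · filter_upwards [eventually_mem_range_sumMap_inclusion ht c]; rintro n ⟨c', rfl⟩
      exact ⟨.inr c', rfl⟩
  induction A with
  | pred k ts =>
    filter_upwards [(eventually_all_finite ts.finite_toSet).2 fun a _ => hterm a]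
      with n hn
    obtain ⟨ts', rfl⟩ := (Set.range_list_map _).symm.subset hn
    exact ⟨.pred k ts', rfl⟩
  | eq a b =>
    filter_upwards [hterm a, hterm b]; rintro n ⟨a', rfl⟩ ⟨b', rfl⟩
    exact ⟨.eq a' b', rfl⟩
  | neg A ih => filter_upwards [ih]; rintro n ⟨A', rfl⟩; exact ⟨.neg A', rfl⟩
  | cl A ih => filter_upwards [ih]; rintro n ⟨A', rfl⟩; exact ⟨.cl A', rfl⟩
  | ncl A ih => filter_upwards [ih]; rintro n ⟨A', rfl⟩; exact ⟨.ncl A', rfl⟩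
  | all x A ih => filter_upwards [ih]; rintro n ⟨A', rfl⟩; exact ⟨.all x A', rfl⟩
  | ex x A ih => filter_upwards [ih]; rintro n ⟨A', rfl⟩; exact ⟨.ex x A', rfl⟩
  | conj A B ihA ihB =>
    filter_upwards [ihA, ihB]; rintro n ⟨A', rfl⟩ ⟨B', rfl⟩
    exact ⟨.conj A' B', rfl⟩
  | disj A B ihA ihB =>
    filter_upwards [ihA, ihB]; rintro n ⟨A', rfl⟩ ⟨B', rfl⟩
    exact ⟨.disj A' B', rfl⟩

end DirectedUnion

section SkolemHull

open scoped Cardinal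

variable {C D : Type} [Nonempty D] (S : Struc C D) (v : Fm (C ⊕ D) → Bool)

noncomputable def witness (x : ℕ) (A : Fm (C ⊕ D)) (b : Bool) : D :=
  Classical.epsilon fun d => v (subst x (.inr (.inr d)) A) = b

def skolemStep (s : Set D) : Set D :=
  s ∪ Set.range fun q : ℕ × Fm (C ⊕ s) × Bool => witness v q.1 (Fm.embed s q.2.1) q.2.2

def skolemHull : Set D := ⋃ n, (skolemStep v)^[n] (Set.range S.cI)

theorem monotone_iterate_skolemStep (s : Set D) : Monotone fun n => (skolemStep v)^[n] s :=
  monotone_nat_of_le_succ fun n => by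
    rw [Function.iterate_succ_apply']
    exact Set.subset_union_left

theorem range_cI_subset_skolemHull : Set.range S.cI ⊆ skolemHull S v :=
  Set.subset_iUnion (fun n => (skolemStep v)^[n] (Set.range S.cI)) 0

theorem isWitnessClosed_skolemHull : IsWitnessClosed v (skolemHull S v) := by
  unfold skolemHull
  intro x A b hA
  obtain ⟨n, A', rfl⟩ :=
    (Fm.eventually_mem_range_map_inclusion (monotone_iterate_skolemStep v _) A).exists
  have hmem : witness v x (Fm.embed _ A') b ∈ ⋃ n, (skolemStep v)^[n] (Set.range S.cI) :=
    Set.mem_iUnion.2 ⟨n + 1, by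
      rw [Function.iterate_succ_apply']
      exact Or.inr ⟨(x, A', b), rfl⟩⟩
  rw [Fm.embed_map_inclusion] at hA ⊢
  exact ⟨⟨_, hmem⟩, Classical.epsilon_spec hA⟩

variable {κ : Cardinal}

theorem mk_skolemStep_le (hκ : ℵ₀ ≤ κ) (hC : #C ≤ κ) {s : Set D} (hs : #s ≤ κ) :
    #(skolemStep v s) ≤ κ := by
  have hcountable (α : Type) [Countable α] : #α ≤ κ := Cardinal.mk_le_aleph0.trans hκ
  have hfm : #(Fm (C ⊕ s)) ≤ κ :=
    mk_fm_le hκ (by simpa using Cardinal.add_le_of_le hκ hC hs)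
  refine (Cardinal.mk_union_le _ _).trans
    (Cardinal.add_le_of_le hκ hs (Cardinal.mk_range_le.trans ?_))
  simp only [Cardinal.mk_prod, Cardinal.lift_id]
  exact Cardinal.mul_le_of_le hκ (hcountable ℕ) (Cardinal.mul_le_of_le hκ hfm (hcountable Bool))

theorem mk_skolemHull_le (hκ : ℵ₀ ≤ κ) (hC : #C ≤ κ) : #(skolemHull S v) ≤ κ := by
  refine (Cardinal.mk_iUnion_le _).trans
    (Cardinal.mul_le_of_le hκ (Cardinal.mk_le_aleph0.trans hκ) (ciSup_le' fun n => ?_))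
  induction n with
  | zero => exact Cardinal.mk_range_le.trans hC
  | succ n ih =>
    rw [Function.iterate_succ_apply']
    exact mk_skolemStep_le v hκ hC ih

end SkolemHull

end QLETF

namespace S13
open QLETF

theorem downward_lowenheim_skolem_general {C : Type} [Infinite C]
    (Γ : Set (Fm C)) (h : HasModel Γ) :
    ∃ (D : Type) (S : Struc C D) (v : Fm (C ⊕ D) → Bool),
      Nonempty D ∧ IsVal S v ∧ (∀ B ∈ Γ, Sat S v B) ∧
      Cardinal.mk D ≤ Cardinal.mk C := by
  obtain ⟨D, S, v, hD, hv, hΓ⟩ := h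
  have hH := range_cI_subset_skolemHull S v
  refine ⟨skolemHull S v, S.restrict _ hH, v ∘ Fm.embed _, ?_,
    isVal_restrict hv hH (isWitnessClosed_skolemHull S v),
    fun B hB => (sat_restrict hH).2 (hΓ B hB),
    mk_skolemHull_le S v (Cardinal.aleph0_le_mk C) le_rfl⟩
  exact ((Set.range_nonempty _).mono hH).to_subtype

/-- Downward Löwenheim–Skolem for QLET_F: a satisfiable set of sentences over a
signature of cardinality λ (the signature has infinitely many constants and
countably many predicate letters, so λ = #C) has a model of cardinality ≤ λ. -/
theorem downward_lowenheim_skolem {C : Type} [Infinite C]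
    (Γ : Set (Fm C)) (hΓ : ∀ B ∈ Γ, Closed B) (h : HasModel Γ) :
    ∃ (D : Type) (S : Struc C D) (v : Fm (C ⊕ D) → Bool),
      Nonempty D ∧ IsVal S v ∧ (∀ B ∈ Γ, Sat S v B) ∧
      Cardinal.mk D ≤ Cardinal.mk C :=
  downward_lowenheim_skolem_general Γ h

end S13
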